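/- Let A ∈ GL(n, ℤ) and let φ : B_r → ℂⁿ be symplectic and Λ_A-equivariant with φ(0) = 0. Then φ maps each torus orbit onto a torus orbit, φ(Tⁿ·z) = Tⁿ·φ(z) for every z ∈ B_r (where Tⁿ·z = {t·z : t ∈ Tⁿ}), and φ(B_r) = B_r. -/

import Mathlib

open scoped BigOperators

/-- The standard symplectic form on `ℂⁿ`: `ω₀(u, v) = ∑ₖ Im(conj(uₖ)·vₖ)`. -/
noncomputable def omega0 (n : ℕ) (u v : EuclideanSpace ℂ (Fin n)) : ℝ :=
  ∑ k, ((starRingEnd ℂ) (u k) * v k).im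

/-- The componentwise rotation action of the `n`-torus `Tⁿ = (S¹)ⁿ` on `ℂⁿ`. -/
def torusSMul (n : ℕ) (t : Fin n → Circle) (z : EuclideanSpace ℂ (Fin n)) :
    EuclideanSpace ℂ (Fin n) :=
  WithLp.toLp 2 (fun k => (t k : ℂ) * z k)

/-- For `A ∈ GL(n, ℤ)`, the induced torus automorphism `Λ_A(t)ᵢ = ∏ⱼ tⱼ^{Aᵢⱼ}`. -/
noncomputable def torusAut (n : ℕ) (A : GL (Fin n) ℤ) (t : Fin n → Circle) : Fin n → Circle :=
  fun i => ∏ j, t j ^ ((A : Matrix (Fin n) (Fin n) ℤ) i j)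

/-- `φ` is symplectic on the closed ball of radius `r`: it is `C^∞` there and its
Fréchet derivative (within the ball) preserves `ω₀` at every point. -/
noncomputable def IsSymplecticOn (n : ℕ) (r : ℝ)
    (φ : EuclideanSpace ℂ (Fin n) → EuclideanSpace ℂ (Fin n)) : Prop :=
  ContDiffOn ℝ (⊤ : ℕ∞) φ (Metric.closedBall 0 r) ∧
    ∀ z ∈ Metric.closedBall (0 : EuclideanSpace ℂ (Fin n)) r, ∀ u v,
      omega0 n (fderivWithin ℝ φ (Metric.closedBall 0 r) z u)
        (fderivWithin ℝ φ (Metric.closedBall 0 r) z v) = omega0 n u v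

/-- `φ` is `Λ_A`-equivariant on the closed ball of radius `r`. -/
def IsEquivariantOn (n : ℕ) (r : ℝ) (A : GL (Fin n) ℤ)
    (φ : EuclideanSpace ℂ (Fin n) → EuclideanSpace ℂ (Fin n)) : Prop :=
  ∀ t : Fin n → Circle, ∀ z ∈ Metric.closedBall (0 : EuclideanSpace ℂ (Fin n)) r,
    φ (torusSMul n t z) = torusSMul n (torusAut n A t) (φ z)

/-- The torus orbit `Tⁿ·z = {t·z : t ∈ Tⁿ}` through a point `z ∈ ℂⁿ`. -/
def torusOrbit (n : ℕ) (z : EuclideanSpace ℂ (Fin n)) : Set (EuclideanSpace ℂ (Fin n)) :=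
  Set.range fun t : Fin n → Circle => torusSMul n t z



namespace EquivariantSymplecticAux
open Complex Metric


lemma circle_coe_pow (z : Circle) (k : ℕ) : ((z ^ k : Circle) : ℂ) = (z:ℂ) ^ k := by
  induction k with
  | zero => simp
  | succ k ih => rw [pow_succ, pow_succ, Circle.coe_mul, ih]

lemma circle_coe_zpow (z : Circle) (m : ℤ) : ((z ^ m : Circle) : ℂ) = (z:ℂ) ^ m := by
  exact Circle.coe_zpow z m

lemma circle_norm (z : Circle) : ‖(z:ℂ)‖ = 1 := by
  simpa using Circle.norm_coe z

lemma zpow_sum {G : Type*} [CommGroup G] (a : G) {ι : Type*} (s : Finset ι) (e : ι → ℤ) :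
    a ^ (∑ j ∈ s, e j) = ∏ j ∈ s, a ^ e j := by
  induction s using Finset.cons_induction with
  | empty => simp
  | cons i s hi ih => rw [Finset.sum_cons, Finset.prod_cons, zpow_add, ih]

lemma circle_exp_zpow (x : ℝ) (m : ℤ) : (Circle.exp x) ^ m = Circle.exp (m * x) := by
  apply Subtype.ext
  rw [circle_coe_zpow, Circle.coe_exp, Circle.coe_exp, ← Complex.exp_int_mul]
  congr 1
  push_cast
  ring

lemma torusAut_comp {n : ℕ} (A B : GL (Fin n) ℤ) (t : Fin n → Circle) :
    torusAut n A (torusAut n B t) =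
      fun i => ∏ m, t m ^ (((A : Matrix (Fin n) (Fin n) ℤ) * (B : Matrix (Fin n) (Fin n) ℤ)) i m) := by
  funext i
  unfold torusAut
  calc ∏ j, (∏ m, t m ^ (B : Matrix (Fin n) (Fin n) ℤ) j m) ^ (A : Matrix (Fin n) (Fin n) ℤ) i j
      = ∏ j, ∏ m, t m ^ ((A : Matrix (Fin n) (Fin n) ℤ) i j * (B : Matrix (Fin n) (Fin n) ℤ) j m) := by
        refine Finset.prod_congr rfl fun j _ => ?_
        rw [← Finset.prod_zpow]
        refine Finset.prod_congr rfl fun m _ => ?_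
        rw [mul_comm, zpow_mul]
    _ = ∏ m, ∏ j, t m ^ ((A : Matrix (Fin n) (Fin n) ℤ) i j * (B : Matrix (Fin n) (Fin n) ℤ) j m) :=
        Finset.prod_comm
    _ = ∏ m, t m ^ (((A : Matrix (Fin n) (Fin n) ℤ) * (B : Matrix (Fin n) (Fin n) ℤ)) i m) := by
        refine Finset.prod_congr rfl fun m _ => ?_
        rw [Matrix.mul_apply, zpow_sum]

lemma torusAut_right_inv {n : ℕ} (A : GL (Fin n) ℤ) (t : Fin n → Circle) :
    torusAut n A (torusAut n A⁻¹ t) = t := by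
  rw [torusAut_comp]
  funext i
  have h : ((A : Matrix (Fin n) (Fin n) ℤ) * ((A⁻¹ : GL (Fin n) ℤ) : Matrix (Fin n) (Fin n) ℤ))
      = 1 := by
    have h1 : (A * A⁻¹ : GL (Fin n) ℤ) = 1 := mul_inv_cancel A
    calc ((A : Matrix (Fin n) (Fin n) ℤ) * ((A⁻¹ : GL (Fin n) ℤ) : Matrix (Fin n) (Fin n) ℤ))
        = ((A * A⁻¹ : GL (Fin n) ℤ) : Matrix (Fin n) (Fin n) ℤ) := (Units.val_mul _ _).symm
      _ = 1 := by rw [h1]; rfl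
  rw [h]
  have : ∀ m : Fin n, t m ^ ((1 : Matrix (Fin n) (Fin n) ℤ) i m) = if i = m then t i else 1 := by
    intro m
    by_cases hm : i = m
    · subst hm; simp [Matrix.one_apply]
    · simp [Matrix.one_apply, hm]
  simp only [this]
  simp

lemma torusSMul_norm {n : ℕ} (t : Fin n → Circle) (z : EuclideanSpace ℂ (Fin n)) :
    ‖torusSMul n t z‖ = ‖z‖ := by
  rw [EuclideanSpace.norm_eq, EuclideanSpace.norm_eq]
  congr 1
  refine Finset.sum_congr rfl fun k _ => ?_
  have : ‖torusSMul n t z k‖ = ‖z k‖ := by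
    show ‖(t k : ℂ) * z k‖ = ‖z k‖
    rw [norm_mul, circle_norm, one_mul]
  rw [this]

lemma torusSMul_mem {n : ℕ} {r : ℝ} (t : Fin n → Circle) {z : EuclideanSpace ℂ (Fin n)}
    (hz : z ∈ closedBall (0 : EuclideanSpace ℂ (Fin n)) r) :
    torusSMul n t z ∈ closedBall (0 : EuclideanSpace ℂ (Fin n)) r := by
  rw [mem_closedBall_zero_iff] at hz ⊢
  rw [torusSMul_norm]; exact hz



lemma hasDerivAt_euclidean {m : ℕ} {g : ℝ → EuclideanSpace ℂ (Fin m)}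
    {g' : EuclideanSpace ℂ (Fin m)} {x : ℝ}
    (h : ∀ i, HasDerivAt (fun θ => g θ i) (g' i) x) : HasDerivAt g g' x := by
  have hp : HasDerivAt (fun θ => (fun i => g θ i : ∀ _ : Fin m, ℂ)) (fun i => g' i) x :=
    hasDerivAt_pi.2 h
  have hL := ((PiLp.continuousLinearEquiv 2 ℝ (fun _ : Fin m => ℂ)).symm.toContinuousLinearMap.hasFDerivAt
    (x := (fun i => g x i : ∀ _ : Fin m, ℂ))).comp_hasDerivAt x hp
  exact hL

lemma hasFDerivAt_normSq (a : ℂ) :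
    HasFDerivAt Complex.normSq
      (((2*a.re) • Complex.reCLM + (2*a.im) • Complex.imCLM : ℂ →L[ℝ] ℝ)) a := by
  have h : (Complex.normSq : ℂ → ℝ) = fun w : ℂ => w.re*w.re + w.im*w.im :=
    funext fun w => by simp [Complex.normSq_apply]
  rw [h]
  have hre : HasFDerivAt (fun w : ℂ => w.re) (Complex.reCLM : ℂ →L[ℝ] ℝ) a :=
    Complex.reCLM.hasFDerivAt
  have him : HasFDerivAt (fun w : ℂ => w.im) (Complex.imCLM : ℂ →L[ℝ] ℝ) a :=
    Complex.imCLM.hasFDerivAt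
  have := (hre.fun_mul hre).fun_add (him.fun_mul him)
  refine this.congr_fderiv ?_
  ext v
  simp
  ring


lemma exp_curve_hasDerivAt (a : ℝ) (w : ℂ) :
    HasDerivAt (fun θ : ℝ => Complex.exp (((a * θ : ℝ) : ℂ) * Complex.I) * w)
      ((a:ℂ) * Complex.I * w) 0 := by
  have h1 : HasDerivAt (fun θ : ℝ => ((a * θ : ℝ) : ℂ)) ((a : ℂ)) 0 := by
    have h0 : HasDerivAt (fun θ : ℝ => a * θ) a 0 := by
      simpa using (hasDerivAt_id (0:ℝ)).const_mul a
    have h2 := (Complex.ofRealCLM.hasFDerivAt (x := (a * 0:ℝ))).comp_hasDerivAt 0 h0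
    have h3 : (⇑Complex.ofRealCLM ∘ fun θ : ℝ => a * θ) = fun θ : ℝ => ((a * θ : ℝ) : ℂ) := by
      funext θ; simp [Function.comp]
    rw [h3] at h2
    simpa using h2
  have h2 := (h1.mul_const Complex.I).cexp.mul_const w
  simpa using h2


noncomputable def tcurve (n : ℕ) (k : Fin n) (θ : ℝ) : Fin n → Circle :=
  fun j => if j = k then Circle.exp θ else 1

lemma tcurve_zero (n : ℕ) (k : Fin n) (z : EuclideanSpace ℂ (Fin n)) :
    torusSMul n (tcurve n k 0) z = z := by
  ext j
  show ((tcurve n k 0 j : ℂ)) * z j = z j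
  unfold tcurve
  by_cases hj : j = k <;> simp [hj, Circle.exp_zero]

lemma torusAut_tcurve {n : ℕ} (A : GL (Fin n) ℤ) (k : Fin n) (θ : ℝ) (i : Fin n) :
    torusAut n A (tcurve n k θ) i = Circle.exp (((A : Matrix (Fin n) (Fin n) ℤ) i k : ℝ) * θ) := by
  unfold torusAut tcurve
  have h : ∀ j : Fin n, (if j = k then Circle.exp θ else 1) ^ ((A : Matrix (Fin n) (Fin n) ℤ) i j)
      = if j = k then Circle.exp θ ^ ((A : Matrix (Fin n) (Fin n) ℤ) i j) else 1 := by
    intro j; by_cases hj : j = k <;> simp [hj]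
  simp only [h]
  rw [Finset.prod_ite_eq' Finset.univ k
    (fun j => Circle.exp θ ^ ((A : Matrix (Fin n) (Fin n) ℤ) i j))]
  simp [circle_exp_zpow, -Circle.exp_intCast_mul]

lemma curve_hasDerivAt {n : ℕ} (k : Fin n) (z : EuclideanSpace ℂ (Fin n)) :
    HasDerivAt (fun θ => torusSMul n (tcurve n k θ) z)
      (WithLp.toLp 2 (fun j => if j = k then Complex.I * z k else 0) : EuclideanSpace ℂ (Fin n)) 0 := by
  apply hasDerivAt_euclidean
  intro j
  have hshow : (fun θ => torusSMul n (tcurve n k θ) z j)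
      = fun θ => ((tcurve n k θ j : ℂ)) * z j := rfl
  rw [hshow]
  by_cases hj : j = k
  · subst hj
    have hfun : (fun θ => ((tcurve n j θ j : ℂ)) * z j)
        = fun θ : ℝ => Complex.exp (((1 * θ : ℝ) : ℂ) * Complex.I) * z j := by
      funext θ
      unfold tcurve
      simp [Circle.coe_exp]
    rw [hfun]
    have := exp_curve_hasDerivAt 1 (z j)
    simpa using this
  · have hfun : (fun θ => ((tcurve n k θ j : ℂ)) * z j) = fun _ : ℝ => z j := by
      funext θ; unfold tcurve; simp [hj]
    rw [hfun]
    simpa [hj] using hasDerivAt_const (0:ℝ) (z j)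

lemma image_curve_hasDerivAt {n : ℕ} (A : GL (Fin n) ℤ) (k : Fin n)
    (w : EuclideanSpace ℂ (Fin n)) :
    HasDerivAt (fun θ => torusSMul n (torusAut n A (tcurve n k θ)) w)
      (WithLp.toLp 2 (fun i => (((A : Matrix (Fin n) (Fin n) ℤ) i k : ℝ) : ℂ) * Complex.I * w i) :
        EuclideanSpace ℂ (Fin n)) 0 := by
  apply hasDerivAt_euclidean
  intro i
  have hshow : (fun θ => torusSMul n (torusAut n A (tcurve n k θ)) w i)
      = fun θ : ℝ => Complex.exp ((((((A : Matrix (Fin n) (Fin n) ℤ) i k : ℝ)) * θ : ℝ) : ℂ)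
          * Complex.I) * w i := by
    funext θ
    show ((torusAut n A (tcurve n k θ) i : ℂ)) * w i = _
    rw [torusAut_tcurve, Circle.coe_exp]
  rw [hshow]
  exact exp_curve_hasDerivAt _ (w i)



section main
variable {n : ℕ} {r : ℝ} {A : GL (Fin n) ℤ}
  {φ : EuclideanSpace ℂ (Fin n) → EuclideanSpace ℂ (Fin n)}

local notation "S" => closedBall (0 : EuclideanSpace ℂ (Fin n)) r

/-- Key derivative identity. -/
lemma key_deriv (hsymp : IsSymplecticOn n r φ) (hequiv : IsEquivariantOn n r A φ)
    {z : EuclideanSpace ℂ (Fin n)} (hz : z ∈ S) (k : Fin n) :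
    fderivWithin ℝ φ S z (WithLp.toLp 2 (fun j => if j = k then Complex.I * z k else 0)) =
      (WithLp.toLp 2 (fun i => (((A : Matrix (Fin n) (Fin n) ℤ) i k : ℝ) : ℂ) * Complex.I * φ z i) :
        EuclideanSpace ℂ (Fin n)) := by
  have hD : HasFDerivWithinAt φ (fderivWithin ℝ φ S z) S z :=
    ((hsymp.1 z hz).differentiableWithinAt (by simp)).hasFDerivWithinAt
  have hc : HasDerivAt (fun θ => torusSMul n (tcurve n k θ) z)
      (WithLp.toLp 2 (fun j => if j = k then Complex.I * z k else 0) : EuclideanSpace ℂ (Fin n)) 0 :=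
    curve_hasDerivAt k z
  have hmaps : Set.MapsTo (fun θ => torusSMul n (tcurve n k θ) z) Set.univ S :=
    fun θ _ => torusSMul_mem _ hz
  have hcomp := hD.comp_hasDerivWithinAt_of_eq 0 (hc.hasDerivWithinAt (s := Set.univ)) hmaps
    (tcurve_zero n k z).symm
  have heq : (φ ∘ fun θ => torusSMul n (tcurve n k θ) z)
      = fun θ => torusSMul n (torusAut n A (tcurve n k θ)) (φ z) := by
    funext θ
    exact hequiv (tcurve n k θ) z hz
  rw [heq] at hcomp
  have hg := image_curve_hasDerivAt A k (φ z)
  exact (hasDerivWithinAt_univ.mp hcomp).unique hg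


lemma omega_X {z : EuclideanSpace ℂ (Fin n)} (k : Fin n) (v : EuclideanSpace ℂ (Fin n)) :
    omega0 n (WithLp.toLp 2 (fun j => if j = k then Complex.I * z k else 0) : EuclideanSpace ℂ (Fin n)) v
      = -((starRingEnd ℂ) (z k) * v k).re := by
  unfold omega0
  rw [Finset.sum_eq_single_of_mem k (Finset.mem_univ k)]
  · have : ((WithLp.toLp 2 (fun j => if j = k then Complex.I * z k else 0) : EuclideanSpace ℂ (Fin n)) k)
        = Complex.I * z k := by simp
    rw [this]
    simp [Complex.mul_im, Complex.mul_re]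
    ring
  · intro j _ hj
    have : ((WithLp.toLp 2 (fun j => if j = k then Complex.I * z k else 0) : EuclideanSpace ℂ (Fin n)) j)
        = 0 := by simp [hj]
    rw [this]
    simp

lemma omega_Y (d : Fin n → ℤ) (w0 w : EuclideanSpace ℂ (Fin n)) :
    omega0 n (WithLp.toLp 2 (fun i => ((d i : ℝ) : ℂ) * Complex.I * w0 i) : EuclideanSpace ℂ (Fin n)) w
      = -∑ i, (d i : ℝ) * ((starRingEnd ℂ) (w0 i) * w i).re := by
  unfold omega0
  rw [← Finset.sum_neg_distrib]
  refine Finset.sum_congr rfl fun i _ => ?_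
  have : ((WithLp.toLp 2 (fun i => ((d i : ℝ) : ℂ) * Complex.I * w0 i) : EuclideanSpace ℂ (Fin n)) i)
      = ((d i : ℝ) : ℂ) * Complex.I * w0 i := rfl
  rw [this]
  simp [Complex.mul_im, Complex.mul_re]
  ring

lemma moment_rel (hsymp : IsSymplecticOn n r φ) (hequiv : IsEquivariantOn n r A φ)
    {z : EuclideanSpace ℂ (Fin n)} (hz : z ∈ S) (k : Fin n) (v : EuclideanSpace ℂ (Fin n)) :
    ∑ i, (((A : Matrix (Fin n) (Fin n) ℤ) i k : ℝ))
        * ((starRingEnd ℂ) (φ z i) * (fderivWithin ℝ φ S z v) i).re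
      = ((starRingEnd ℂ) (z k) * v k).re := by
  have h := hsymp.2 z hz (WithLp.toLp 2 (fun j => if j = k then Complex.I * z k else 0)) v
  rw [key_deriv hsymp hequiv hz k] at h
  rw [omega_Y ((fun i => (A : Matrix (Fin n) (Fin n) ℤ) i k)) (φ z) (fderivWithin ℝ φ S z v),
    omega_X k v] at h
  linarith

lemma star_identity (hsymp : IsSymplecticOn n r φ) (hequiv : IsEquivariantOn n r A φ)
    (h0 : φ 0 = 0) (hr : 0 ≤ r) {z : EuclideanSpace ℂ (Fin n)} (hz : z ∈ S) (k : Fin n) :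
    ∑ i, (((A : Matrix (Fin n) (Fin n) ℤ) i k : ℝ)) * Complex.normSq (φ z i)
      = Complex.normSq (z k) := by
  classical
  set P : (i : Fin n) → (EuclideanSpace ℂ (Fin n) →L[ℝ] ℂ) :=
    fun i => (EuclideanSpace.proj (𝕜 := ℂ) i).restrictScalars ℝ with hP
  set F : EuclideanSpace ℂ (Fin n) → ℝ := fun z =>
    (∑ i, (((A : Matrix (Fin n) (Fin n) ℤ) i k : ℝ)) * Complex.normSq (φ z i))
      - Complex.normSq (z k) with hF
  have hFderiv : ∀ x ∈ S, HasFDerivWithinAt F (0 : EuclideanSpace ℂ (Fin n) →L[ℝ] ℝ) S x := by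
    intro x hx
    have hDx : HasFDerivWithinAt φ (fderivWithin ℝ φ S x) S x :=
      ((hsymp.1 x hx).differentiableWithinAt (by simp)).hasFDerivWithinAt
    have hproj : ∀ i, HasFDerivWithinAt (fun z => φ z i)
        ((P i).comp (fderivWithin ℝ φ S x)) S x := by
      intro i
      exact ((P i).hasFDerivAt.comp_hasFDerivWithinAt x hDx)
    have hns : ∀ i : Fin n, HasFDerivWithinAt (fun z => Complex.normSq (φ z i))
        ((((2*(φ x i).re) • Complex.reCLM + (2*(φ x i).im) • Complex.imCLM : ℂ →L[ℝ] ℝ)).comp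
          ((P i).comp (fderivWithin ℝ φ S x))) S x := by
      intro i
      exact (hasFDerivAt_normSq (φ x i)).comp_hasFDerivWithinAt x (hproj i)
    have hsum : HasFDerivWithinAt
        (fun z => ∑ i, (((A : Matrix (Fin n) (Fin n) ℤ) i k : ℝ)) * Complex.normSq (φ z i))
        (∑ i, (((A : Matrix (Fin n) (Fin n) ℤ) i k : ℝ)) •
          ((((2*(φ x i).re) • Complex.reCLM + (2*(φ x i).im) • Complex.imCLM : ℂ →L[ℝ] ℝ)).comp
          ((P i).comp (fderivWithin ℝ φ S x)))) S x := by
      exact HasFDerivWithinAt.fun_sum (fun i _ => (hns i).const_mul _)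
    have hlast : HasFDerivWithinAt (fun z : EuclideanSpace ℂ (Fin n) => Complex.normSq (z k))
        ((((2*(x k).re) • Complex.reCLM + (2*(x k).im) • Complex.imCLM : ℂ →L[ℝ] ℝ)).comp
          (P k)) S x :=
      (hasFDerivAt_normSq (x k)).comp_hasFDerivWithinAt x (P k).hasFDerivAt.hasFDerivWithinAt
    have hT := hsum.sub hlast
    have hT0 : (∑ i, (((A : Matrix (Fin n) (Fin n) ℤ) i k : ℝ)) •
          ((((2*(φ x i).re) • Complex.reCLM + (2*(φ x i).im) • Complex.imCLM : ℂ →L[ℝ] ℝ)).comp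
          ((P i).comp (fderivWithin ℝ φ S x)))) -
        ((((2*(x k).re) • Complex.reCLM + (2*(x k).im) • Complex.imCLM : ℂ →L[ℝ] ℝ)).comp
          (P k)) = 0 := by
      ext v
      have hmr := moment_rel hsymp hequiv hx k v
      have hPapp : ∀ i, (P i) ((fderivWithin ℝ φ S x) v) = (fderivWithin ℝ φ S x) v i := by
        intro i; rfl
      have hPv : (P k) v = v k := rfl
      simp only [ContinuousLinearMap.sub_apply, ContinuousLinearMap.coe_sum',
        Finset.sum_apply, ContinuousLinearMap.coe_smul', Pi.smul_apply,
        ContinuousLinearMap.coe_comp', Function.comp_apply, hPapp, hPv,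
        ContinuousLinearMap.add_apply, ContinuousLinearMap.smul_apply,
        ContinuousLinearMap.zero_apply, smul_eq_mul]
      have hre : ∀ a b : ℂ, ((starRingEnd ℂ) a * b).re = a.re * b.re + a.im * b.im := by
        intro a b; simp [Complex.mul_re]
      calc (∑ i, (((A : Matrix (Fin n) (Fin n) ℤ) i k : ℝ)) *
              (2*(φ x i).re * ((fderivWithin ℝ φ S x) v i).re
                + 2*(φ x i).im * ((fderivWithin ℝ φ S x) v i).im))
            - (2*(x k).re * (v k).re + 2*(x k).im * (v k).im)
          = 2 * ((∑ i, (((A : Matrix (Fin n) (Fin n) ℤ) i k : ℝ))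
              * ((starRingEnd ℂ) (φ x i) * ((fderivWithin ℝ φ S x) v) i).re)
              - ((starRingEnd ℂ) (x k) * v k).re) := by
            simp only [hre]
            rw [mul_sub, Finset.mul_sum]
            congr 1
            · exact Finset.sum_congr rfl fun i _ => by ring
            · ring
        _ = 0 := by rw [hmr]; ring
    rw [hT0] at hT
    exact hT
  have hconv : Convex ℝ (S : Set (EuclideanSpace ℂ (Fin n))) := convex_closedBall _ _
  have h0mem : (0 : EuclideanSpace ℂ (Fin n)) ∈ S := by
    simpa [mem_closedBall_zero_iff] using hr
  have hbound := hconv.norm_image_sub_le_of_norm_hasFDerivWithin_le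
    (f' := fun _ => (0 : EuclideanSpace ℂ (Fin n) →L[ℝ] ℝ)) hFderiv
    (fun x _ => le_of_eq norm_zero) h0mem hz
  have hF0 : F 0 = 0 := by
    simp only [hF, h0]
    have : ∀ i : Fin n, ((0 : EuclideanSpace ℂ (Fin n)) i) = 0 := fun i => rfl
    simp [this]
  have hFz : F z = F 0 := by
    have h2 : ‖F z - F 0‖ = 0 :=
      le_antisymm (by simpa using hbound) (norm_nonneg _)
    have := norm_eq_zero.mp h2
    linarith [sub_eq_zero.mp this]
  rw [hF0] at hFz
  simp only [hF] at hFz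
  linarith





lemma vanish (hequiv : IsEquivariantOn n r A φ) {z : EuclideanSpace ℂ (Fin n)} (hz : z ∈ S)
    {i j : Fin n} (hA : (A : Matrix (Fin n) (Fin n) ℤ) i j ≠ 0) (hzj : z j = 0) :
    φ z i = 0 := by
  classical
  set a : ℤ := (A : Matrix (Fin n) (Fin n) ℤ) i j with ha
  set t : Fin n → Circle := fun m => if m = j then Circle.exp (Real.pi / a) else 1 with ht
  have hfix : torusSMul n t z = z := by
    ext m
    show (t m : ℂ) * z m = z m
    by_cases hm : m = j
    · subst hm; rw [hzj, mul_zero]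
    · simp [ht, hm]
  have heq := hequiv t z hz
  rw [hfix] at heq
  have hcoord : φ z i = ((torusAut n A t i : ℂ)) * φ z i := congrArg (fun x => x i) heq
  have haut : torusAut n A t i = Circle.exp Real.pi := by
    unfold torusAut
    have h : ∀ m : Fin n, t m ^ ((A : Matrix (Fin n) (Fin n) ℤ) i m)
        = if m = j then Circle.exp (Real.pi / a) ^ ((A : Matrix (Fin n) (Fin n) ℤ) i m)
          else 1 := by
      intro m; by_cases hm : m = j <;> simp [ht, hm]
    simp only [h]
    rw [Finset.prod_ite_eq' Finset.univ j
      (fun m => Circle.exp (Real.pi / a) ^ ((A : Matrix (Fin n) (Fin n) ℤ) i m))]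
    simp only [Finset.mem_univ, if_true, ← ha, circle_exp_zpow]
    congr 1
    have : (a : ℝ) ≠ 0 := Int.cast_ne_zero.mpr hA
    field_simp
  have hm1 : ((Circle.exp Real.pi : Circle) : ℂ) = -1 := by
    rw [Circle.coe_exp]
    exact_mod_cast Complex.exp_pi_mul_I
  rw [haut, hm1] at hcoord
  have : (2 : ℂ) * φ z i = 0 := by linear_combination hcoord
  simpa using this

lemma perm_modulus (hr : 0 < r) (hequiv : IsEquivariantOn n r A φ)
    (hstar : ∀ z ∈ S, ∀ k, ∑ i, (((A : Matrix (Fin n) (Fin n) ℤ) i k : ℝ))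
      * Complex.normSq (φ z i) = Complex.normSq (z k)) :
    ∃ e : Equiv.Perm (Fin n), ∀ z ∈ S, ∀ k,
      Complex.normSq (φ z (e k)) = Complex.normSq (z k) := by
  classical
  set z0 : Fin n → EuclideanSpace ℂ (Fin n) := fun k => EuclideanSpace.single k (r:ℂ) with hz0
  have hz0mem : ∀ k, z0 k ∈ S := by
    intro k
    rw [mem_closedBall_zero_iff, hz0]
    rw [EuclideanSpace.norm_single]
    simp [abs_of_pos hr]
  have hz0kk : ∀ k, (z0 k) k = (r:ℂ) := by intro k; simp [hz0]
  have hz0kj : ∀ k j, j ≠ k → (z0 k) j = 0 := by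
    intro k j hj; simp [hz0, EuclideanSpace.single_apply, hj]
  have hex : ∀ k, ∃ i, (A : Matrix (Fin n) (Fin n) ℤ) i k ≠ 0
      ∧ ∀ j, j ≠ k → (A : Matrix (Fin n) (Fin n) ℤ) i j = 0 := by
    intro k
    have hs := hstar (z0 k) (hz0mem k) k
    rw [hz0kk k] at hs
    have hrr : Complex.normSq ((r:ℝ):ℂ) = r^2 := by simp [Complex.normSq_ofReal]; ring
    rw [hrr] at hs
    have hne : ∑ i, (((A : Matrix (Fin n) (Fin n) ℤ) i k : ℝ))
        * Complex.normSq (φ (z0 k) i) ≠ 0 := by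
      rw [hs]; positivity
    obtain ⟨i, _, hi⟩ := Finset.exists_ne_zero_of_sum_ne_zero hne
    have hAik : (A : Matrix (Fin n) (Fin n) ℤ) i k ≠ 0 := by
      intro h; rw [h] at hi; simp at hi
    have hφne : φ (z0 k) i ≠ 0 := by
      intro h; rw [h] at hi; simp at hi
    refine ⟨i, hAik, fun j hj => ?_⟩
    by_contra hA
    exact hφne (vanish hequiv (hz0mem k) hA (hz0kj k j hj))
  choose g hg1 hg2 using hex
  have ginj : Function.Injective g := by
    intro k k' hkk
    by_contra hne
    have h1 := hg1 k
    have h2 := hg2 k' k hne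
    rw [hkk] at h1
    exact h1 h2
  have gbij : Function.Bijective g := Finite.injective_iff_bijective.mp ginj
  set e : Equiv.Perm (Fin n) := Equiv.ofBijective g gbij with he
  -- rows
  have hrow : ∀ i j, j ≠ e.symm i → (A : Matrix (Fin n) (Fin n) ℤ) i j = 0 := by
    intro i j hj
    have hgi : g (e.symm i) = i := e.apply_symm_apply i
    have := hg2 (e.symm i) j hj
    rwa [hgi] at this
  -- diagonal entries are 1
  have hdiag : ∀ k, (A : Matrix (Fin n) (Fin n) ℤ) (g k) k = 1 := by
    intro k
    -- first: it is ±1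
    have hunit : IsUnit ((A : Matrix (Fin n) (Fin n) ℤ) (g k) k) := by
      have hmul : ((A : Matrix (Fin n) (Fin n) ℤ) *
          ((A⁻¹ : GL (Fin n) ℤ) : Matrix (Fin n) (Fin n) ℤ)) = 1 := by
        have h1 : (A * A⁻¹ : GL (Fin n) ℤ) = 1 := mul_inv_cancel A
        calc ((A : Matrix (Fin n) (Fin n) ℤ) * ((A⁻¹ : GL (Fin n) ℤ) : Matrix (Fin n) (Fin n) ℤ))
            = ((A * A⁻¹ : GL (Fin n) ℤ) : Matrix (Fin n) (Fin n) ℤ) := (Units.val_mul _ _).symm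
          _ = 1 := by rw [h1]; rfl
      have hentry : ((A : Matrix (Fin n) (Fin n) ℤ) *
          ((A⁻¹ : GL (Fin n) ℤ) : Matrix (Fin n) (Fin n) ℤ)) (g k) (g k) = 1 := by
        rw [hmul, Matrix.one_apply_eq]
      rw [Matrix.mul_apply] at hentry
      have hsum : ∑ j, (A : Matrix (Fin n) (Fin n) ℤ) (g k) j
          * ((A⁻¹ : GL (Fin n) ℤ) : Matrix (Fin n) (Fin n) ℤ) j (g k)
          = (A : Matrix (Fin n) (Fin n) ℤ) (g k) k
            * ((A⁻¹ : GL (Fin n) ℤ) : Matrix (Fin n) (Fin n) ℤ) k (g k) := by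
        refine Finset.sum_eq_single_of_mem k (Finset.mem_univ k) fun j _ hj => ?_
        rw [hg2 k j hj, zero_mul]
      rw [hsum] at hentry
      exact IsUnit.of_mul_eq_one _ hentry
    rcases Int.isUnit_iff.mp hunit with h1 | hm1
    · exact h1
    · exfalso
      have hs := hstar (z0 k) (hz0mem k) k
      rw [hz0kk k] at hs
      have hsum : ∑ i, (((A : Matrix (Fin n) (Fin n) ℤ) i k : ℝ))
          * Complex.normSq (φ (z0 k) i)
          = (((A : Matrix (Fin n) (Fin n) ℤ) (g k) k : ℝ))
            * Complex.normSq (φ (z0 k) (g k)) := by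
        refine Finset.sum_eq_single_of_mem (g k) (Finset.mem_univ _) fun i _ hi => ?_
        have : (A : Matrix (Fin n) (Fin n) ℤ) i k = 0 := by
          apply hrow
          intro hcon
          apply hi
          rw [hcon]
          exact (e.apply_symm_apply i).symm
        rw [this]; simp
      rw [hsum, hm1] at hs
      push_cast at hs
      have h1 : Complex.normSq ((r:ℝ):ℂ) = r^2 := by simp [Complex.normSq_ofReal]; ring
      rw [h1] at hs
      nlinarith [Complex.normSq_nonneg (φ (z0 k) (g k)), sq_nonneg r]
  refine ⟨e, fun z hz k => ?_⟩
  have hs := hstar z hz k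
  have hsum : ∑ i, (((A : Matrix (Fin n) (Fin n) ℤ) i k : ℝ)) * Complex.normSq (φ z i)
      = (((A : Matrix (Fin n) (Fin n) ℤ) (g k) k : ℝ)) * Complex.normSq (φ z (g k)) := by
    refine Finset.sum_eq_single_of_mem (g k) (Finset.mem_univ _) fun i _ hi => ?_
    have : (A : Matrix (Fin n) (Fin n) ℤ) i k = 0 := by
      apply hrow
      intro hcon
      apply hi
      rw [hcon]
      exact (e.apply_symm_apply i).symm
    rw [this]; simp
  rw [hsum, hdiag k] at hs
  have hek : e k = g k := rfl
  rw [hek]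
  simpa using hs





theorem final (hr : 0 < r) (hequiv : IsEquivariantOn n r A φ)
    (e : Equiv.Perm (Fin n))
    (hmod : ∀ z ∈ S, ∀ k, Complex.normSq (φ z (e k)) = Complex.normSq (z k)) :
    (∀ z ∈ S, φ '' torusOrbit n z = torusOrbit n (φ z)) ∧ φ '' S = S := by
  have habs : ∀ w : ℂ, ‖w‖^2 = Complex.normSq w := fun w => by
    rw [Complex.sq_norm]
  have hnorm : ∀ z ∈ S, ‖φ z‖ = ‖z‖ := by
    intro z hz
    rw [EuclideanSpace.norm_eq, EuclideanSpace.norm_eq]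
    congr 1
    calc ∑ i, ‖φ z i‖^2 = ∑ k, ‖φ z (e k)‖^2 := (Equiv.sum_comp e (fun i => ‖φ z i‖^2)).symm
      _ = ∑ k, ‖z k‖^2 := by
          refine Finset.sum_congr rfl fun k _ => ?_
          rw [habs, habs, hmod z hz k]
  constructor
  · -- orbits
    intro z hz
    ext w
    constructor
    · rintro ⟨_, ⟨t, rfl⟩, rfl⟩
      exact ⟨torusAut n A t, (hequiv t z hz).symm⟩
    · rintro ⟨t, rfl⟩
      refine ⟨torusSMul n (torusAut n A⁻¹ t) z, ⟨torusAut n A⁻¹ t, rfl⟩, ?_⟩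
      rw [hequiv (torusAut n A⁻¹ t) z hz, torusAut_right_inv]
  · -- image of ball
    apply Set.Subset.antisymm
    · rintro _ ⟨z, hz, rfl⟩
      rw [mem_closedBall_zero_iff, hnorm z hz]
      exact mem_closedBall_zero_iff.mp hz
    · intro w hw
      -- construct preimage
      set z : EuclideanSpace ℂ (Fin n) := WithLp.toLp 2 (fun k => ((‖w (e k)‖ : ℝ) : ℂ)) with hzdef
      have hzk : ∀ k, z k = ((‖w (e k)‖ : ℝ) : ℂ) := fun k => rfl
      have hznorm : ‖z‖ = ‖w‖ := by
        rw [EuclideanSpace.norm_eq, EuclideanSpace.norm_eq]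
        congr 1
        calc ∑ k, ‖z k‖^2 = ∑ k, ‖w (e k)‖^2 := by
              refine Finset.sum_congr rfl fun k _ => ?_
              rw [hzk]
              simp
          _ = ∑ i, ‖w i‖^2 := Equiv.sum_comp e (fun i => ‖w i‖^2)
      have hzmem : z ∈ S := by
        rw [mem_closedBall_zero_iff, hznorm]
        exact mem_closedBall_zero_iff.mp hw
      -- moduli agree
      have hmm : ∀ i, Complex.normSq (φ z i) = Complex.normSq (w i) := by
        intro i
        have hi : i = e (e.symm i) := (e.apply_symm_apply i).symm
        rw [hi, hmod z hzmem (e.symm i), hzk]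
        rw [← hi]
        rw [Complex.normSq_ofReal]
        rw [← habs]
        ring
      -- circle factors
      have hchoice : ∀ i, ∃ c : Circle, (c : ℂ) * φ z i = w i := by
        intro i
        by_cases hzi : φ z i = 0
        · refine ⟨1, ?_⟩
          have : Complex.normSq (w i) = 0 := by rw [← hmm i, hzi]; simp
          have hw0 : w i = 0 := by
            exact Complex.normSq_eq_zero.mp this
          rw [hzi, hw0, mul_zero]
        · have hne : ‖φ z i‖ ≠ 0 := norm_ne_zero_iff.mpr hzi
          have hnormeq : ‖w i‖ = ‖φ z i‖ := by
            have h1 := hmm i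
            rw [← habs, ← habs] at h1
            nlinarith [norm_nonneg (w i), norm_nonneg (φ z i)]
          have hmem : (w i / φ z i) ∈ Submonoid.unitSphere ℂ := by
            show (w i / φ z i) ∈ Metric.sphere (0:ℂ) 1
            rw [mem_sphere_zero_iff_norm, norm_div, hnormeq]
            exact div_self hne
          refine ⟨⟨w i / φ z i, hmem⟩, ?_⟩
          show (w i / φ z i) * φ z i = w i
          field_simp
      choose t ht using hchoice
      refine ⟨torusSMul n (torusAut n A⁻¹ t) z, torusSMul_mem _ hzmem, ?_⟩
      rw [hequiv (torusAut n A⁻¹ t) z hzmem, torusAut_right_inv]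
      ext i
      exact ht i


end main

end EquivariantSymplecticAux

/-- If `φ : B_r → ℂⁿ` is symplectic and `Λ_A`-equivariant with `φ(0) = 0`, then `φ`
maps each torus orbit onto a torus orbit, `φ(Tⁿ·z) = Tⁿ·φ(z)` for every `z ∈ B_r`,
and `φ(B_r) = B_r`. -/
theorem equivariant_symplectic_maps_orbits_to_orbits (n : ℕ) (hn : 1 ≤ n) (r : ℝ)
    (hr : 0 < r) (A : GL (Fin n) ℤ)
    (φ : EuclideanSpace ℂ (Fin n) → EuclideanSpace ℂ (Fin n))
    (hsymp : IsSymplecticOn n r φ) (hequiv : IsEquivariantOn n r A φ)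
    (h0 : φ 0 = 0) :
    (∀ z ∈ Metric.closedBall (0 : EuclideanSpace ℂ (Fin n)) r,
      φ '' torusOrbit n z = torusOrbit n (φ z)) ∧
    φ '' Metric.closedBall 0 r = Metric.closedBall 0 r := by
  classical
  obtain ⟨e, hmod⟩ := EquivariantSymplecticAux.perm_modulus hr hequiv
    (fun z hz k => EquivariantSymplecticAux.star_identity hsymp hequiv h0 hr.le hz k)
  exact EquivariantSymplecticAux.final hr hequiv e hmod
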